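/- Discrete volume bound: let w ∈ [0,1]^N with W = (1/N)Σᵢwᵢ > 0, and let x ∈ [0,1]^N be any minimizer of SD(x) = 1 − 2⟨x,w⟩/(Σᵢxᵢ + Σᵢwᵢ). Then the normalized volume V(x) = (1/N)Σᵢxᵢ satisfies W² − 1/N ≤ V(x) ≤ 1. -/
import Mathlib


open Filter

noncomputable section

/-- Discrete soft-Dice loss `SD(x) = 1 - 2⟨x,w⟩/(‖x‖₁ + ‖w‖₁)`. -/
def SDd {N : ℕ} (w x : Fin N → ℝ) : ℝ :=
  1 - 2 * (∑ i, x i * w i) / ((∑ i, x i) + (∑ i, w i))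

/-- Discrete Dice score `D(y) = 2⟨y,w⟩/(‖y‖₁ + ‖w‖₁)`. -/
def Dd {N : ℕ} (w y : Fin N → ℝ) : ℝ :=
  2 * (∑ i, y i * w i) / ((∑ i, y i) + (∑ i, w i))

/-- The set of soft-Dice values over `[0,1]^N`. -/
def SDdvals {N : ℕ} (w : Fin N → ℝ) : Set ℝ :=
  {v : ℝ | ∃ x : Fin N → ℝ, (∀ i, x i ∈ Set.Icc (0:ℝ) 1) ∧ v = SDd w x}

/-- The set of Dice values over `{0,1}^N`. -/
def Ddvals {N : ℕ} (w : Fin N → ℝ) : Set ℝ :=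
  {v : ℝ | ∃ y : Fin N → ℝ, (∀ i, y i = 0 ∨ y i = 1) ∧ v = Dd w y}

theorem discrete_soft_dice_minimizer_volume_bounds
    {N : ℕ} (hN : 1 ≤ N) (w : Fin N → ℝ)
    (hw : ∀ i, w i ∈ Set.Icc (0:ℝ) 1) (hpos : 0 < (∑ i, w i) / N)
    (x : Fin N → ℝ) (hx : ∀ i, x i ∈ Set.Icc (0:ℝ) 1)
    (hmin : SDd w x = sInf (SDdvals w)) :
    ((∑ i, w i) / N) ^ 2 - 1 / N ≤ (∑ i, x i) / N ∧ (∑ i, x i) / N ≤ 1 := by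
  have hNpos : (0:ℝ) < N := by exact_mod_cast Nat.lt_of_lt_of_le Nat.zero_lt_one hN
  set A := ∑ i, x i with hA
  set B := ∑ i, w i with hB
  have hBpos : 0 < B := by
    by_contra h
    push_neg at h
    have : B / N ≤ 0 := div_nonpos_of_nonpos_of_nonneg h hNpos.le
    linarith
  have hA0 : 0 ≤ A := Finset.sum_nonneg fun i _ => (hx i).1
  have hAN : A ≤ N := by
    calc A ≤ ∑ _i : Fin N, (1:ℝ) := Finset.sum_le_sum fun i _ => (hx i).2
    _ = N := by simp
  -- inner product bounds
  have hip_le : (∑ i, x i * w i) ≤ A := by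
    apply Finset.sum_le_sum
    intro i _
    calc x i * w i ≤ x i * 1 := by
          apply mul_le_mul_of_nonneg_left (hw i).2 (hx i).1
    _ = x i := mul_one _
  -- bounded below
  have hbdd : BddBelow (SDdvals w) := by
    refine ⟨-1, ?_⟩
    rintro v ⟨z, hz, rfl⟩
    have hz0 : 0 ≤ ∑ i, z i := Finset.sum_nonneg fun i _ => (hz i).1
    have hzip : (∑ i, z i * w i) ≤ ∑ i, z i := by
      apply Finset.sum_le_sum
      intro i _
      calc z i * w i ≤ z i * 1 := mul_le_mul_of_nonneg_left (hw i).2 (hz i).1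
      _ = z i := mul_one _
    have hden : 0 < (∑ i, z i) + B := by linarith
    have : 2 * (∑ i, z i * w i) / ((∑ i, z i) + B) ≤ 2 := by
      rw [div_le_iff₀ hden]
      linarith
    simp only [SDd]
    linarith
  -- compare with the all-ones vector
  have hone : SDd w (fun _ => 1) ∈ SDdvals w := ⟨fun _ => 1, fun i => ⟨zero_le_one, le_refl 1⟩, rfl⟩
  have hle : SDd w x ≤ SDd w (fun _ => 1) := by
    rw [hmin]
    exact csInf_le hbdd hone
  have hone_val : SDd w (fun _ => 1) = 1 - 2 * B / ((N:ℝ) + B) := by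
    simp [SDd, hB]
  rw [hone_val] at hle
  simp only [SDd] at hle
  have hdenx : 0 < A + B := by linarith
  have hdenN : 0 < (N:ℝ) + B := by linarith
  -- 2B/(N+B) ≤ 2⟨x,w⟩/(A+B) ≤ 2A/(A+B)
  have h1 : 2 * B / ((N:ℝ) + B) ≤ 2 * (∑ i, x i * w i) / (A + B) := by linarith
  have h2 : 2 * (∑ i, x i * w i) / (A + B) ≤ 2 * A / (A + B) := by
    gcongr
  have h3 : 2 * B / ((N:ℝ) + B) ≤ 2 * A / (A + B) := le_trans h1 h2
  rw [div_le_div_iff₀ hdenN hdenx] at h3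
  -- from 2B(A+B) ≤ 2A(N+B) deduce B² ≤ AN
  have hkey : B ^ 2 ≤ A * N := by nlinarith
  constructor
  · have : (B / N) ^ 2 ≤ A / N := by
      rw [div_pow, div_le_div_iff₀ (by positivity) hNpos]
      calc B ^ 2 * N ≤ A * N * N := by nlinarith
      _ = A * N ^ 2 := by ring
    have h1N : (0:ℝ) < 1 / N := by positivity
    linarith
  · rw [div_le_one hNpos]; exact hAN
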